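/- For every positive integer n, the reduced factor complexity of the Thue–Morse sequence satisfies ρ_t^red(n) = 2(M_n − m_n + 1), where m_n (resp. M_n) is the minimum (resp. maximum) number of alternations among length-n factors of the Thue–Morse sequence. -/

import Mathlib

/-- The reduction of a word: replace each maximal run of identical characters
by a single character. -/
def red {α : Type*} [DecidableEq α] (w : List α) : List α :=
  w.destutter (· ≠ ·)

/-- The length-`k` factor of the infinite sequence `x` (1-indexed) starting at
position `i`. -/
def factorAt {α : Type*} (x : ℕ → α) (i k : ℕ) : List α :=
  (List.range k).map (fun j => x (i + j))

/-- The reduced factor complexity: the number of length-`n` factors of `x`,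
counted up to reduced-equivalence (`red v = red w`). -/
noncomputable def redFactorComplexity {α : Type*} [DecidableEq α]
    (x : ℕ → α) (n : ℕ) : ℕ :=
  Set.ncard { u : List α | ∃ i ≥ 1, u = red (factorAt x i n) }

/-- The Thue–Morse sequence (1-indexed): `t n` is the parity of the number of
1's in the binary expansion of `n - 1`. -/
def thueMorse (n : ℕ) : Bool :=
  decide ((Nat.digits 2 (n - 1)).sum % 2 = 1)

/-- The number of alternations (occurrences of 01 or 10) in a binary word. -/
def alt (w : List Bool) : ℕ :=
  (List.zipWith (fun a b => a != b) w w.tail).count true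

/-- The minimum number of alternations among length-`k` factors of Thue–Morse. -/
noncomputable def tmAltMin (k : ℕ) : ℕ :=
  sInf { a : ℕ | ∃ i ≥ 1, a = alt (factorAt thueMorse i k) }

/-- The maximum number of alternations among length-`k` factors of Thue–Morse. -/
noncomputable def tmAltMax (k : ℕ) : ℕ :=
  sSup { a : ℕ | ∃ i ≥ 1, a = alt (factorAt thueMorse i k) }

/-- The Thue–Morse morphism `0 → 01`, `1 → 10`. -/
def mu (w : List Bool) : List Bool :=
  w.flatMap (fun b => if b then [true, false] else [false, true])

/-- The regular paperfolding sequence (1-indexed): writing `n = n' * 2^k` with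
`n'` odd, `f n = 1` iff `n' ≡ 3 (mod 4)`. -/
def paperfold (n : ℕ) : Bool :=
  decide ((n / 2 ^ (n.factorization 2)) % 4 = 3)

/-- The reduced abelian complexity: the number of length-`n` factors of `x`,
counted up to the equivalence identifying `v` and `w` whenever `red v` is a
rearrangement of the characters of `red w`. -/
noncomputable def redAbelianComplexity {α : Type*} [DecidableEq α]
    (x : ℕ → α) (n : ℕ) : ℕ :=
  Set.ncard { m : Multiset α | ∃ i ≥ 1, m = ↑(red (factorAt x i n)) }


/-!
The reduction of a nonempty binary word is the alternating word determined by its first letter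
and its number of alternations, so the reduced classes of length-`n` factors correspond to the
pairs (first letter, alternation count) that occur. Sliding the window by one position changes
the alternation count by at most one, so every count between `m_n` and `M_n` occurs. Finally the
factors of `t` are closed under complementation (`t (i + 2^k) = ¬ t i` for `1 ≤ i ≤ 2^k`), so
every count occurs with both first letters.
-/

def alternatingWord : Bool → ℕ → List Bool
  | b, 0 => [b]
  | b, k + 1 => b :: alternatingWord (!b) k

lemma length_alternatingWord (b : Bool) (k : ℕ) : (alternatingWord b k).length = k + 1 := by
  induction k generalizing b with
  | zero => rfl
  | succ k ih => simp [alternatingWord, ih]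

lemma head?_alternatingWord (b : Bool) (k : ℕ) : (alternatingWord b k).head? = some b := by
  cases k <;> rfl

lemma alternatingWord_injective : Function.Injective (Function.uncurry alternatingWord) := by
  rintro ⟨b, k⟩ ⟨b', k'⟩ h
  have hk := congrArg List.length h
  have hb := congrArg List.head? h
  simp only [Function.uncurry_apply_pair, length_alternatingWord, head?_alternatingWord,
    Option.some.injEq, Nat.add_right_cancel_iff] at hk hb
  rw [hk, hb]

@[simp] lemma alt_nil : alt [] = 0 := rfl

@[simp] lemma alt_singleton (a : Bool) : alt [a] = 0 := rfl

lemma alt_cons_cons (a b : Bool) (l : List Bool) :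
    alt (a :: b :: l) = (if a = b then 0 else 1) + alt (b :: l) := by
  simp only [alt, List.tail_cons, List.zipWith_cons_cons, List.count_cons]
  cases a <;> cases b <;> simp [Nat.add_comm]

lemma alt_map_not (l : List Bool) : alt (l.map not) = alt l := by
  simp [alt, ← List.map_tail, List.zipWith_map]

lemma alt_le_length (l : List Bool) : alt l ≤ l.length := by
  grw [alt, List.count_le_length, List.length_zipWith]
  omega

lemma alt_cons_mem_Icc (a : Bool) (l : List Bool) :
    alt (a :: l) ∈ Set.Icc (alt l) (alt l + 1) := by
  cases l with
  | nil => simp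
  | cons b l => rw [alt_cons_cons, Set.mem_Icc]; split <;> omega

lemma alt_concat_mem_Icc (l : List Bool) (b : Bool) :
    alt (l ++ [b]) ∈ Set.Icc (alt l) (alt l + 1) := by
  induction l with
  | nil => simp
  | cons a l ih =>
    cases l with
    | nil => rw [List.singleton_append, alt_cons_cons]; split <;> simp
    | cons a' l =>
      simp only [List.cons_append, Set.mem_Icc] at ih ⊢
      rw [alt_cons_cons, alt_cons_cons]
      omega

lemma red_cons (a : Bool) (l : List Bool) : red (a :: l) = alternatingWord a (alt (a :: l)) := by
  rw [red, List.destutter_cons']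
  induction l generalizing a with
  | nil => rfl
  | cons b l ih =>
    rw [List.destutter'_cons, alt_cons_cons]
    by_cases h : a = b
    · subst h; simp [ih]
    · obtain rfl : b = !a := by cases a <;> cases b <;> simp_all
      simp [ih, alternatingWord, Nat.add_comm]

lemma factorAt_succ {α : Type*} (x : ℕ → α) (i k : ℕ) :
    factorAt x i (k + 1) = x i :: factorAt x (i + 1) k := by
  simp [factorAt, List.range_succ_eq_map, Nat.add_assoc, Nat.add_comm 1]

lemma factorAt_succ' {α : Type*} (x : ℕ → α) (i k : ℕ) :
    factorAt x i (k + 1) = factorAt x i k ++ [x (i + k)] := by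
  simp [factorAt, List.range_succ]

lemma length_factorAt {α : Type*} (x : ℕ → α) (i k : ℕ) : (factorAt x i k).length = k := by
  simp [factorAt]

lemma abs_alt_factorAt_succ_sub_le (x : ℕ → Bool) (i n : ℕ) :
    |(alt (factorAt x (i + 1) n) : ℤ) - alt (factorAt x i n)| ≤ 1 := by
  cases n with
  | zero => simp [factorAt]
  | succ k =>
    rw [factorAt_succ x i, factorAt_succ' x (i + 1), abs_le]
    obtain ⟨h₁, h₂⟩ := alt_cons_mem_Icc (x i) (factorAt x (i + 1) k)
    obtain ⟨h₃, h₄⟩ := alt_concat_mem_Icc (factorAt x (i + 1) k) (x (i + 1 + k))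
    omega

lemma head?_factorAt {α : Type*} (x : ℕ → α) (i : ℕ) {n : ℕ} (hn : 1 ≤ n) :
    (factorAt x i n).head? = some (x i) := by
  obtain ⟨k, rfl⟩ := Nat.exists_eq_add_of_le' hn
  rw [factorAt_succ, List.head?_cons]

lemma red_factorAt (x : ℕ → Bool) (i : ℕ) {n : ℕ} (hn : 1 ≤ n) :
    red (factorAt x i n) = alternatingWord (x i) (alt (factorAt x i n)) := by
  obtain ⟨k, rfl⟩ := Nat.exists_eq_add_of_le' hn
  rw [factorAt_succ, red_cons]

lemma exists_apply_eq_of_abs_succ_sub_le_one {f : ℕ → ℕ}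
    (hf : ∀ k, |(f (k + 1) : ℤ) - f k| ≤ 1) {i j a : ℕ} (hi : f i ≤ a) (hj : a ≤ f j) :
    ∃ k, min i j ≤ k ∧ f k = a := by
  suffices h : ∀ {p q}, p ≤ q → (f p ≤ a ∧ a ≤ f q ∨ f q ≤ a ∧ a ≤ f p) →
      ∃ k, p ≤ k ∧ f k = a by
    rcases le_total i j with hij | hij
    · simpa [min_eq_left hij] using h hij (.inl ⟨hi, hj⟩)
    · simpa [min_eq_right hij] using h hij (.inr ⟨hi, hj⟩)
  intro p q hpq
  induction q, hpq using Nat.le_induction with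
  | base => exact fun h => ⟨p, le_rfl, by omega⟩
  | succ q _ ih =>
    intro h
    by_cases h' : f p ≤ a ∧ a ≤ f q ∨ f q ≤ a ∧ a ≤ f p
    · exact ih h'
    · exact ⟨q + 1, by omega, by have := abs_le.mp (hf q); omega⟩

def altValues (x : ℕ → Bool) (n : ℕ) : Set ℕ :=
  { a | ∃ i ≥ 1, a = alt (factorAt x i n) }

section altValues

variable (x : ℕ → Bool) (n : ℕ)

lemma alt_factorAt_mem_altValues {i : ℕ} (hi : 1 ≤ i) :
    alt (factorAt x i n) ∈ altValues x n := by
  use i, hi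

lemma altValues_nonempty : (altValues x n).Nonempty := ⟨_, alt_factorAt_mem_altValues x n le_rfl⟩

lemma bddAbove_altValues : BddAbove (altValues x n) := by
  refine ⟨n, ?_⟩
  rintro _ ⟨i, -, rfl⟩
  simpa [length_factorAt] using alt_le_length (factorAt x i n)

lemma altValues_eq_Icc :
    altValues x n = Set.Icc (sInf (altValues x n)) (sSup (altValues x n)) := by
  refine Set.Subset.antisymm
    (fun a ha => Set.mem_Icc.mpr ⟨Nat.sInf_le ha, le_csSup (bddAbove_altValues x n) ha⟩) ?_
  rintro a ⟨hmin, hmax⟩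
  obtain ⟨i, hi, hi_eq⟩ := Nat.sInf_mem (altValues_nonempty x n)
  obtain ⟨j, hj, hj_eq⟩ := Nat.sSup_mem (altValues_nonempty x n) (bddAbove_altValues x n)
  obtain ⟨k, hk, rfl⟩ := exists_apply_eq_of_abs_succ_sub_le_one
    (f := fun k => alt (factorAt x k n)) (fun k => abs_alt_factorAt_succ_sub_le x k n)
    (hi_eq ▸ hmin) (hj_eq ▸ hmax)
  exact ⟨k, by omega, rfl⟩

lemma ncard_altValues :
    (altValues x n).ncard = sSup (altValues x n) - sInf (altValues x n) + 1 := by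
  have := csInf_le_csSup (altValues_nonempty x n) (OrderBot.bddBelow _) (bddAbove_altValues x n)
  nth_rw 1 [altValues_eq_Icc, Set.ncard_Icc_nat]
  omega

end altValues

theorem redFactorComplexity_eq_of_map_not {x : ℕ → Bool} {n : ℕ} (hn : 1 ≤ n)
    (hx : ∀ i ≥ 1, ∃ j ≥ 1, factorAt x j n = (factorAt x i n).map not) :
    redFactorComplexity x n = 2 * (sSup (altValues x n) - sInf (altValues x n) + 1) := by
  have hreds : { u | ∃ i ≥ 1, u = red (factorAt x i n) } =
      Function.uncurry alternatingWord '' (Set.univ ×ˢ altValues x n) := by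
    ext u
    constructor
    · rintro ⟨i, hi, rfl⟩
      exact ⟨(x i, _), ⟨trivial, alt_factorAt_mem_altValues x n hi⟩, (red_factorAt x i hn).symm⟩
    · rintro ⟨⟨b, _⟩, ⟨-, i, hi, rfl⟩, rfl⟩
      by_cases hb : x i = b
      · exact ⟨i, hi, by rw [red_factorAt x i hn, hb]; rfl⟩
      · obtain ⟨j, hj, hji⟩ := hx i hi
        have hxj : x j = b := by
          have := head?_factorAt x j hn
          rw [hji, List.head?_map, head?_factorAt x i hn] at this
          cases b <;> simp_all
        exact ⟨j, hj, by rw [red_factorAt x j hn, hxj, hji, alt_map_not]; rfl⟩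
  rw [redFactorComplexity, hreds, Set.ncard_image_of_injective _ alternatingWord_injective,
    Set.ncard_prod, Set.ncard_univ, Nat.card_eq_fintype_card, Fintype.card_bool, ncard_altValues]

lemma thueMorse_add_two_pow {i k : ℕ} (hi : 1 ≤ i) (hik : i ≤ 2 ^ k) :
    thueMorse (i + 2 ^ k) = !thueMorse i := by
  obtain ⟨m, rfl⟩ := Nat.exists_eq_add_of_le' hi
  have hlen : (Nat.digits 2 m).length ≤ k :=
    (Nat.digits_length_le_iff (by norm_num) m).mpr (by omega)
  have hdigits := Nat.digits_append_zeroes_append_digits (b := 2) (m := 1) (n := m)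
    (k := k - (Nat.digits 2 m).length) (by norm_num) (by norm_num)
  rw [Nat.add_sub_cancel' hlen, mul_one] at hdigits
  simp only [thueMorse, Nat.add_sub_cancel, show m + 1 + 2 ^ k - 1 = m + 2 ^ k by omega,
    ← hdigits, List.sum_append, List.sum_replicate, smul_zero]
  rcases Nat.mod_two_eq_zero_or_one (Nat.digits 2 m).sum with h | h <;> simp [Nat.add_mod, h]

lemma exists_factorAt_thueMorse_eq_map_not (n : ℕ) {i : ℕ} (hi : 1 ≤ i) :
    ∃ j ≥ 1, factorAt thueMorse j n = (factorAt thueMorse i n).map not := by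
  have := Nat.lt_two_pow_self (n := i + n)
  refine ⟨i + 2 ^ (i + n), by omega, ?_⟩
  simp only [factorAt, List.map_map]
  refine List.map_congr_left fun j hj => ?_
  simp only [List.mem_range] at hj
  rw [Function.comp_apply, ← thueMorse_add_two_pow (k := i + n) (by omega) (by omega),
    Nat.add_right_comm]

theorem stmt10 (n : ℕ) (hn : 1 ≤ n) :
    redFactorComplexity thueMorse n = 2 * (tmAltMax n - tmAltMin n + 1) :=
  redFactorComplexity_eq_of_map_not hn fun _ hi => exists_factorAt_thueMorse_eq_map_not n hi
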